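/- Let x^0 > 0 and define the classic EM iteration x^{k+1} = P(x^k). Then the sequence {x^k} converges to a limit x* ≥ 0 that minimizes I_A^b over the nonnegative orthant ℝ_+^N, x* is a fixed point of the EM operator P, and I_A^b(x^k) decreases monotonically to min_{x ∈ ℝ_+^N} I_A^b(x). -/

import Mathlib

open Finset Filter Topology

noncomputable def dd {M N : ℕ} (A : Fin M → Fin N → ℝ) (x : Fin N → ℝ) (i : Fin M) : ℝ :=
  ∑ j, A i j * x j

noncomputable def ff {M N : ℕ} (A : Fin M → Fin N → ℝ) (b : Fin M → ℝ) (x : Fin N → ℝ) (j : Fin N) : ℝ :=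
  ∑ i, A i j * b i / dd A x i

noncomputable def EMop {M N : ℕ} (A : Fin M → Fin N → ℝ) (b : Fin M → ℝ) (x : Fin N → ℝ) : Fin N → ℝ :=
  fun j => x j * ff A b x j

noncomputable def KL {N : ℕ} (u v : Fin N → ℝ) : ℝ :=
  (∑ j, u j * Real.log (u j / v j)) - ∑ j, (u j - v j)

noncomputable def IAb {M N : ℕ} (A : Fin M → Fin N → ℝ) (b : Fin M → ℝ) (x : Fin N → ℝ) : ℝ :=
  (∑ i, b i * Real.log (b i / dd A x i)) - ∑ i, (b i - dd A x i)

noncomputable def finSup0 {ι : Type*} (s : Finset ι) (g : ι → ℝ) : ℝ :=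
  if h : s.Nonempty then s.sup' h g else 0

noncomputable def finInf0 {ι : Type*} (s : Finset ι) (g : ι → ℝ) : ℝ :=
  if h : s.Nonempty then s.inf' h g else 0

/-!
An EM step lowers `I` by at least `KL (P x) x` (Jensen's inequality for `log`, row by row), so
`I` is nonincreasing along the orbit. The orbit is bounded, since `∑ P x = ∑ b`, and a bound on
`I` keeps `d` away from `0`, so a cluster point `z` has `d z > 0`. As `KL (P x_k) x_k → 0` and `KL`
dominates the squared Hellinger distance, `z` is a fixed point of `P`. For a fixed point, Jensen
again gives `I y - I z ≤ KL z y - KL z (P y)`; hence `KL z x_k` is nonincreasing, tends to `0`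
along a subsequence, so tends to `0`, and the whole orbit converges to `z`. Finally `f_j z ≤ 1`
for every `j` (if `z_j = 0` and `f_j z > 1`, the coordinates `x_k,j` would eventually increase),
and these Kuhn–Tucker conditions make `z` a minimizer.
-/

open Real

lemma sq_sqrt_sub_sqrt_le_mul_log_div_sub {u v : ℝ} (hu : 0 ≤ u) (hv : 0 < v) :
    (√u - √v) ^ 2 ≤ u * log (u / v) - (u - v) := by
  rcases hu.eq_or_lt with rfl | hu
  · simp [sq_sqrt hv.le]
  set s := √u
  set t := √v
  have hs : 0 < s := sqrt_pos.2 hu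
  have ht : 0 < t := sqrt_pos.2 hv
  have hu' : u = s ^ 2 := (sq_sqrt hu.le).symm
  have hv' : v = t ^ 2 := (sq_sqrt hv.le).symm
  have hlog : log (u / v) = 2 * log (s / t) := by
    rw [hu', hv', ← div_pow, log_pow]; norm_num
  have hkey : s * (s - t) ≤ s ^ 2 * log (s / t) := by
    have h := one_sub_inv_le_log_of_pos (div_pos hs ht)
    rw [inv_div] at h
    calc s * (s - t) = s ^ 2 * (1 - t / s) := by field_simp
      _ ≤ s ^ 2 * log (s / t) := by gcongr
  rw [hlog, hu', hv']
  nlinarith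

lemma sum_mul_sum_mul_log_le {ι κ : Type*} [Fintype ι] [Fintype κ] {β : ι → ℝ}
    {W : ι → κ → ℝ} {p : κ → ℝ} (hβ : ∀ i, 0 ≤ β i) (hW : ∀ i k, 0 ≤ W i k)
    (hW1 : ∀ i, β i ≠ 0 → ∑ k, W i k = 1) (hp : ∀ k, 0 < p k) :
    ∑ i, β i * ∑ k, W i k * log (p k) ≤ ∑ i, β i * log (∑ k, W i k * p k) := by
  refine Finset.sum_le_sum fun i _ => ?_
  rcases (hβ i).eq_or_lt with h | h
  · simp [← h]
  · refine mul_le_mul_of_nonneg_left ?_ h.le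
    simpa using strictConcaveOn_log_Ioi.concaveOn.le_map_sum (fun k _ => hW i k)
      (hW1 i h.ne') (fun k _ => hp k)

lemma div_exp_le_of_mul_log_div_sub_le {u v T : ℝ} (hu : 0 < u) (hv : 0 < v)
    (h : u * log (u / v) - (u - v) ≤ T) : u / exp ((T + u) / u) ≤ v := by
  have hlog : log (u / v) ≤ (T + u) / u := by
    rw [le_div_iff₀ hu]; linarith
  rw [log_le_iff_le_exp (div_pos hu hv), div_le_iff₀ hv] at hlog
  rw [div_le_iff₀ (exp_pos _)]
  linarith

section Divergence

variable {N : ℕ}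

lemma KL_eq_sum (u v : Fin N → ℝ) : KL u v = ∑ j, (u j * log (u j / v j) - (u j - v j)) :=
  (Finset.sum_sub_distrib _ _).symm

/-- The squared Hellinger distance, without the customary factor `1 / 2`. -/
noncomputable def hellingerSq (u v : Fin N → ℝ) : ℝ :=
  ∑ j, (√(u j) - √(v j)) ^ 2

lemma hellingerSq_le_KL {u v : Fin N → ℝ} (hu : ∀ j, 0 ≤ u j) (hv : ∀ j, 0 < v j) :
    hellingerSq u v ≤ KL u v := by
  rw [KL_eq_sum]
  exact Finset.sum_le_sum fun j _ => sq_sqrt_sub_sqrt_le_mul_log_div_sub (hu j) (hv j)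

lemma hellingerSq_nonneg (u v : Fin N → ℝ) : 0 ≤ hellingerSq u v :=
  Finset.sum_nonneg fun _ _ => sq_nonneg _

lemma KL_nonneg {u v : Fin N → ℝ} (hu : ∀ j, 0 ≤ u j) (hv : ∀ j, 0 < v j) : 0 ≤ KL u v :=
  (hellingerSq_nonneg u v).trans (hellingerSq_le_KL hu hv)

lemma eq_of_hellingerSq_eq_zero {u v : Fin N → ℝ} (hu : ∀ j, 0 ≤ u j) (hv : ∀ j, 0 ≤ v j)
    (h : hellingerSq u v = 0) : u = v := by
  funext j
  have hj := (Finset.sum_eq_zero_iff_of_nonneg fun _ _ => sq_nonneg _).1 h j (Finset.mem_univ j)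
  exact (sqrt_inj (hu j) (hv j)).1 (sub_eq_zero.1 (pow_eq_zero_iff two_ne_zero |>.1 hj))

lemma Filter.Tendsto.hellingerSq {α : Type*} {l : Filter α} {u v : α → Fin N → ℝ}
    {a b : Fin N → ℝ} (hu : Tendsto u l (𝓝 a)) (hv : Tendsto v l (𝓝 b)) :
    Tendsto (fun n => hellingerSq (u n) (v n)) l (𝓝 (hellingerSq a b)) := by
  refine tendsto_finsetSum _ fun j _ => ((continuous_sqrt.tendsto _).comp ?_).sub
    ((continuous_sqrt.tendsto _).comp ?_) |>.pow 2
  exacts [tendsto_pi_nhds.1 hu j, tendsto_pi_nhds.1 hv j]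

lemma tendsto_of_hellingerSq_tendsto_zero {α : Type*} {l : Filter α} {u : Fin N → ℝ}
    {v : α → Fin N → ℝ} (hu : ∀ j, 0 ≤ u j) (hv : ∀ n j, 0 ≤ v n j)
    (h : Tendsto (fun n => hellingerSq u (v n)) l (𝓝 0)) : Tendsto v l (𝓝 u) := by
  refine tendsto_pi_nhds.2 fun j => ?_
  have hsq : Tendsto (fun n => (√(v n j) - √(u j)) ^ 2) l (𝓝 0) := by
    refine squeeze_zero (fun _ => sq_nonneg _) (fun n => ?_) h
    rw [← neg_sub, neg_sq]
    exact Finset.single_le_sum (f := fun j => (√(u j) - √(v n j)) ^ 2)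
      (fun _ _ => sq_nonneg _) (Finset.mem_univ j)
  have hsqrt : Tendsto (fun n => √(v n j)) l (𝓝 √(u j)) := by
    rw [tendsto_iff_dist_tendsto_zero]
    simpa [Function.comp_def, Real.dist_eq, sqrt_sq_eq_abs] using
      (continuous_sqrt.tendsto 0).comp hsq
  simpa [sq_sqrt (hv _ j), sq_sqrt (hu j)] using hsqrt.pow 2

lemma tendsto_KL_self {z : Fin N → ℝ} (hz : ∀ j, 0 ≤ z j) : Tendsto (KL z) (𝓝 z) (𝓝 0) := by
  rw [funext (KL_eq_sum z), ← Finset.sum_const_zero (s := (Finset.univ : Finset (Fin N)))]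
  refine tendsto_finsetSum _ fun j _ => ?_
  rcases (hz j).eq_or_lt with h | h
  · simpa [← h] using (continuous_apply j).tendsto z
  · have hcoord := (continuous_apply j).continuousAt (x := z)
    have : ContinuousAt (fun v : Fin N → ℝ => z j * log (z j / v j) - (z j - v j)) z :=
      (continuousAt_const.mul ((continuousAt_const.div hcoord h.ne').log (by simp [h.ne']))).sub
        (continuousAt_const.sub hcoord)
    simpa [div_self h.ne'] using this.tendsto

end Divergence

structure IsEMData {M N : ℕ} (A : Fin M → Fin N → ℝ) (b : Fin M → ℝ) : Prop where
  nonneg : ∀ i j, 0 ≤ A i j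
  sum_col : ∀ j, ∑ i, A i j = 1
  exists_pos_row : ∀ i, ∃ j, 0 < A i j
  b_pos : ∀ i, 0 < b i

section EM

variable {M N : ℕ} {A : Fin M → Fin N → ℝ} {b : Fin M → ℝ}

lemma dd_nonneg (hA : ∀ i j, 0 ≤ A i j) {y : Fin N → ℝ} (hy : ∀ j, 0 ≤ y j) (i : Fin M) :
    0 ≤ dd A y i :=
  Finset.sum_nonneg fun j _ => mul_nonneg (hA i j) (hy j)

lemma dd_pos (hA : ∀ i j, 0 ≤ A i j) (hrow : ∀ i, ∃ j, 0 < A i j) {y : Fin N → ℝ}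
    (hy : ∀ j, 0 < y j) (i : Fin M) : 0 < dd A y i := by
  obtain ⟨j, hj⟩ := hrow i
  exact Finset.sum_pos' (fun j _ => mul_nonneg (hA i j) (hy j).le)
    ⟨j, Finset.mem_univ j, mul_pos hj (hy j)⟩

lemma ff_pos (hA : ∀ i j, 0 ≤ A i j) (hcol : ∀ j, ∑ i, A i j = 1) (hb : ∀ i, 0 < b i)
    {y : Fin N → ℝ} (hd : ∀ i, 0 < dd A y i) (j : Fin N) : 0 < ff A b y j := by
  obtain ⟨i, _, hi⟩ := Finset.exists_lt_of_sum_lt (by simp [hcol j] : ∑ i, (0 : ℝ) < ∑ i, A i j)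
  exact Finset.sum_pos' (fun i _ => div_nonneg (mul_nonneg (hA i j) (hb i).le) (hd i).le)
    ⟨i, Finset.mem_univ i, div_pos (mul_pos hi (hb i)) (hd i)⟩

lemma EMop_nonneg (hA : ∀ i j, 0 ≤ A i j) (hb : ∀ i, 0 ≤ b i) {y : Fin N → ℝ}
    (hy : ∀ j, 0 ≤ y j) (j : Fin N) : 0 ≤ EMop A b y j :=
  mul_nonneg (hy j) (Finset.sum_nonneg fun i _ =>
    div_nonneg (mul_nonneg (hA i j) (hb i)) (dd_nonneg hA hy i))

lemma EMop_pos (hAb : IsEMData A b) {y : Fin N → ℝ} (hy : ∀ j, 0 < y j) (j : Fin N) :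
    0 < EMop A b y j :=
  mul_pos (hy j)
    (ff_pos hAb.nonneg hAb.sum_col hAb.b_pos (dd_pos hAb.nonneg hAb.exists_pos_row hy) j)

lemma sum_mul_sum_eq_sum_mul_dd (y : Fin N → ℝ) (c : Fin M → ℝ) :
    ∑ j, y j * ∑ i, A i j * c i = ∑ i, c i * dd A y i := by
  simp only [dd, Finset.mul_sum]
  rw [Finset.sum_comm]
  exact Finset.sum_congr rfl fun i _ => Finset.sum_congr rfl fun j _ => by ring

lemma sum_mul_ff (y z : Fin N → ℝ) :
    ∑ j, y j * ff A b z j = ∑ i, b i / dd A z i * dd A y i := by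
  simp only [ff, mul_div_assoc, sum_mul_sum_eq_sum_mul_dd]

lemma sum_dd (hcol : ∀ j, ∑ i, A i j = 1) (y : Fin N → ℝ) : ∑ i, dd A y i = ∑ j, y j := by
  simpa [hcol] using (sum_mul_sum_eq_sum_mul_dd (A := A) y (fun _ => 1)).symm

lemma sum_EMop {y : Fin N → ℝ} (hd : ∀ i, 0 < dd A y i) : ∑ j, EMop A b y j = ∑ i, b i := by
  simp only [EMop, sum_mul_ff]
  exact Finset.sum_congr rfl fun i _ => div_mul_cancel₀ _ (hd i).ne'

lemma EMop_div_self {y : Fin N → ℝ} (hy : ∀ j, 0 < y j) (j : Fin N) :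
    EMop A b y j / y j = ff A b y j :=
  mul_div_cancel_left₀ _ (hy j).ne'

lemma ff_eq_one_of_EMop_eq_self {z : Fin N → ℝ} (hfix : EMop A b z = z) {j : Fin N}
    (hj : z j ≠ 0) : ff A b z j = 1 :=
  mul_left_cancel₀ hj ((congrFun hfix j).trans (mul_one _).symm)

lemma sum_eq_of_EMop_eq_self {z : Fin N → ℝ} (hd : ∀ i, 0 < dd A z i) (hfix : EMop A b z = z) :
    ∑ j, z j = ∑ i, b i := by
  conv_lhs => rw [← hfix]
  exact sum_EMop hd

lemma IAb_sub_IAb (hcol : ∀ j, ∑ i, A i j = 1) (hb : ∀ i, 0 < b i) {u v : Fin N → ℝ}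
    (hu : ∀ i, 0 < dd A u i) (hv : ∀ i, 0 < dd A v i) :
    IAb A b u - IAb A b v = ∑ i, b i * log (dd A v i / dd A u i) + (∑ j, u j - ∑ j, v j) := by
  have hlog : ∀ i, b i * log (b i / dd A u i) - b i * log (b i / dd A v i)
      = b i * log (dd A v i / dd A u i) := fun i => by
    rw [log_div (hb i).ne' (hu i).ne', log_div (hb i).ne' (hv i).ne',
      log_div (hv i).ne' (hu i).ne']
    ring
  simp only [IAb, Finset.sum_sub_distrib, ← sum_dd hcol, ← hlog]
  ring

lemma KL_sub_KL {z y w : Fin N → ℝ} (hz : ∀ j, 0 ≤ z j) (hy : ∀ j, 0 < y j)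
    (hw : ∀ j, 0 < w j) :
    KL z y - KL z w = ∑ j, z j * log (w j / y j) + (∑ j, y j - ∑ j, w j) := by
  have hlog : ∀ j, z j * log (z j / y j) - z j * log (z j / w j) = z j * log (w j / y j) :=
    fun j => by
      rcases (hz j).eq_or_lt with h | h
      · simp [← h]
      rw [log_div h.ne' (hy j).ne', log_div h.ne' (hw j).ne', log_div (hw j).ne' (hy j).ne']
      ring
  simp only [KL, Finset.sum_sub_distrib, ← hlog]
  ring

lemma IAb_eq_KL (y : Fin N → ℝ) : IAb A b y = KL b (dd A y) := rfl

lemma sum_EMop_mul_log_ff_le (hAb : IsEMData A b) {y : Fin N → ℝ} (hy : ∀ j, 0 < y j) :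
    ∑ j, EMop A b y j * log (ff A b y j)
      ≤ ∑ i, b i * log (dd A (EMop A b y) i / dd A y i) := by
  have hd := dd_pos hAb.nonneg hAb.exists_pos_row hy
  have hf := ff_pos hAb.nonneg hAb.sum_col hAb.b_pos hd
  have hjensen := sum_mul_sum_mul_log_le (β := b) (W := fun i j => A i j * y j / dd A y i)
    (p := ff A b y) (fun i => (hAb.b_pos i).le)
    (fun i j => div_nonneg (mul_nonneg (hAb.nonneg i j) (hy j).le) (hd i).le)
    (fun i _ => by rw [← Finset.sum_div]; exact div_self (hd i).ne') hf
  convert hjensen using 1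
  · simp only [EMop, ff, Finset.sum_mul, Finset.mul_sum]
    rw [Finset.sum_comm]
    exact Finset.sum_congr rfl fun i _ => Finset.sum_congr rfl fun j _ => by ring
  · simp only [dd, EMop, Finset.sum_div]
    exact Finset.sum_congr rfl fun i _ => by congr 2; exact Finset.sum_congr rfl fun j _ => by ring

lemma IAb_EMop_add_KL_le (hAb : IsEMData A b) {y : Fin N → ℝ} (hy : ∀ j, 0 < y j) :
    IAb A b (EMop A b y) + KL (EMop A b y) y ≤ IAb A b y := by
  have hd := dd_pos hAb.nonneg hAb.exists_pos_row hy
  have hdiff := IAb_sub_IAb hAb.sum_col hAb.b_pos hd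
    (dd_pos hAb.nonneg hAb.exists_pos_row (EMop_pos hAb hy))
  have hKL : KL (EMop A b y) y
      = ∑ j, EMop A b y j * log (ff A b y j) - (∑ j, EMop A b y j - ∑ j, y j) := by
    simp only [KL, EMop_div_self hy, Finset.sum_sub_distrib]
  linarith [sum_EMop_mul_log_ff_le hAb hy]

lemma sum_mul_log_dd_div_le_of_EMop_eq_self (hAb : IsEMData A b) {z y : Fin N → ℝ}
    (hz : ∀ j, 0 ≤ z j) (hdz : ∀ i, 0 < dd A z i) (hfix : EMop A b z = z)
    (hd : ∀ i, 0 < dd A y i) :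
    ∑ i, b i * log (dd A z i / dd A y i) ≤ ∑ j, z j * log (ff A b y j) := by
  have hjensen := sum_mul_sum_mul_log_le (β := z) (W := fun j i => A i j * b i / dd A z i)
    (p := fun i => dd A z i / dd A y i) hz
    (fun j i => div_nonneg (mul_nonneg (hAb.nonneg i j) (hAb.b_pos i).le) (hdz i).le)
    (fun j hj => ff_eq_one_of_EMop_eq_self hfix hj) (fun i => div_pos (hdz i) (hd i))
  convert hjensen using 1
  · simp only [mul_div_assoc, mul_assoc, sum_mul_sum_eq_sum_mul_dd]
    exact Finset.sum_congr rfl fun i _ => by field_simp [(hdz i).ne']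
  · refine Finset.sum_congr rfl fun j _ => congrArg _ (congrArg _ ?_)
    exact Finset.sum_congr rfl fun i _ => by field_simp [(hdz i).ne']

lemma IAb_sub_IAb_le_KL_sub_KL (hAb : IsEMData A b) {z y : Fin N → ℝ} (hz : ∀ j, 0 ≤ z j)
    (hdz : ∀ i, 0 < dd A z i) (hfix : EMop A b z = z) (hy : ∀ j, 0 < y j) :
    IAb A b y - IAb A b z ≤ KL z y - KL z (EMop A b y) := by
  have hd := dd_pos hAb.nonneg hAb.exists_pos_row hy
  rw [IAb_sub_IAb hAb.sum_col hAb.b_pos hd hdz, KL_sub_KL hz hy (EMop_pos hAb hy),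
    sum_eq_of_EMop_eq_self hdz hfix, sum_EMop hd]
  simp only [EMop_div_self hy]
  linarith [sum_mul_log_dd_div_le_of_EMop_eq_self hAb hz hdz hfix hd]

lemma IAb_le_of_ff_le_one (hcol : ∀ j, ∑ i, A i j = 1) (hb : ∀ i, 0 < b i) {z y : Fin N → ℝ}
    (hdz : ∀ i, 0 < dd A z i) (hsum : ∑ j, z j = ∑ i, b i) (hff : ∀ j, ff A b z j ≤ 1)
    (hy : ∀ j, 0 ≤ y j) (hdy : ∀ i, 0 < dd A y i) : IAb A b z ≤ IAb A b y := by
  have hlog : ∑ i, b i - ∑ i, b i / dd A z i * dd A y i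
      ≤ ∑ i, b i * log (dd A z i / dd A y i) := by
    rw [← Finset.sum_sub_distrib]
    refine Finset.sum_le_sum fun i _ => ?_
    have h := one_sub_inv_le_log_of_pos (div_pos (hdz i) (hdy i))
    rw [inv_div] at h
    calc b i - b i / dd A z i * dd A y i = b i * (1 - dd A y i / dd A z i) := by ring
      _ ≤ b i * log (dd A z i / dd A y i) := mul_le_mul_of_nonneg_left h (hb i).le
  have hkkt : ∑ j, y j * ff A b z j ≤ ∑ j, y j :=
    Finset.sum_le_sum fun j _ => mul_le_of_le_one_right (hy j) (hff j)
  rw [sum_mul_ff] at hkkt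
  linarith [IAb_sub_IAb hcol hb hdy hdz]

lemma div_exp_le_dd_of_IAb_le (hb : ∀ i, 0 < b i) {y : Fin N → ℝ} (hd : ∀ i, 0 < dd A y i)
    {T : ℝ} (hT : IAb A b y ≤ T) (i : Fin M) : b i / exp ((T + b i) / b i) ≤ dd A y i := by
  refine div_exp_le_of_mul_log_div_sub_le (hb i) (hd i) (le_trans ?_ hT)
  rw [IAb_eq_KL, KL_eq_sum]
  exact Finset.single_le_sum (f := fun i => b i * log (b i / dd A y i) - (b i - dd A y i))
    (fun i _ => (sq_nonneg _).trans (sq_sqrt_sub_sqrt_le_mul_log_div_sub (hb i).le (hd i)))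
    (Finset.mem_univ i)

lemma continuous_dd (A : Fin M → Fin N → ℝ) (i : Fin M) : Continuous fun y => dd A y i := by
  unfold dd; fun_prop

lemma continuousAt_ff {z : Fin N → ℝ} (hd : ∀ i, 0 < dd A z i) (j : Fin N) :
    ContinuousAt (fun y => ff A b y j) z := by
  unfold ff
  exact tendsto_finsetSum _ fun i _ =>
    continuousAt_const.div (continuous_dd A i).continuousAt (hd i).ne'

lemma continuousAt_EMop {z : Fin N → ℝ} (hd : ∀ i, 0 < dd A z i) : ContinuousAt (EMop A b) z :=
  continuousAt_pi.2 fun j => (continuous_apply j).continuousAt.mul (continuousAt_ff hd j)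

lemma continuousAt_IAb (hb : ∀ i, 0 < b i) {z : Fin N → ℝ} (hd : ∀ i, 0 < dd A z i) :
    ContinuousAt (IAb A b) z := by
  unfold IAb
  have hdd := fun i => (continuous_dd A i).continuousAt (x := z)
  exact (tendsto_finsetSum _ fun i _ => continuousAt_const.mul
      ((continuousAt_const.div (hdd i) (hd i).ne').log (div_pos (hb i) (hd i)).ne')).sub
    (tendsto_finsetSum _ fun i _ => continuousAt_const.sub (hdd i))

end EM

section Orbit

variable {M N : ℕ} {A : Fin M → Fin N → ℝ} {b : Fin M → ℝ} {x : ℕ → Fin N → ℝ}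

lemma orbit_pos (hAb : IsEMData A b) (hx0 : ∀ j, 0 < x 0 j)
    (hiter : ∀ k, x (k + 1) = EMop A b (x k)) (k : ℕ) : ∀ j, 0 < x k j := by
  induction k with
  | zero => exact hx0
  | succ k ih => rw [hiter k]; exact EMop_pos hAb ih

lemma antitone_IAb_orbit (hAb : IsEMData A b) (hpos : ∀ k j, 0 < x k j)
    (hiter : ∀ k, x (k + 1) = EMop A b (x k)) : Antitone fun k => IAb A b (x k) :=
  antitone_nat_of_succ_le fun k => by
    rw [hiter k]
    linarith [IAb_EMop_add_KL_le hAb (hpos k),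
      KL_nonneg (fun j => (EMop_pos hAb (hpos k) j).le) (hpos k)]

lemma exists_subseq_tendsto_orbit (hAb : IsEMData A b) (hpos : ∀ k j, 0 < x k j)
    (hiter : ∀ k, x (k + 1) = EMop A b (x k)) :
    ∃ z : Fin N → ℝ, (∀ j, 0 ≤ z j) ∧ (∀ i, 0 < dd A z i) ∧
      ∃ φ : ℕ → ℕ, StrictMono φ ∧ Tendsto (x ∘ φ) atTop (𝓝 z) := by
  have hd k := dd_pos hAb.nonneg hAb.exists_pos_row (hpos k)
  have hmem : ∀ k, x (k + 1) ∈ Set.Icc (0 : Fin N → ℝ) (fun _ => ∑ i, b i) := fun k =>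
    ⟨fun j => (hpos (k + 1) j).le, fun j => by
      rw [← sum_EMop (hd k), ← hiter k]
      exact Finset.single_le_sum (fun j _ => (hpos (k + 1) j).le) (Finset.mem_univ j)⟩
  obtain ⟨z, hz, φ, hφ, hφz⟩ :=
    isCompact_Icc.tendsto_subseq' ((tendsto_add_atTop_nat 1).frequently (.of_forall hmem))
  refine ⟨z, hz.1, fun i => ?_, φ, hφ, hφz⟩
  have hlow n : b i / exp ((IAb A b (x 0) + b i) / b i) ≤ dd A (x (φ n)) i :=
    div_exp_le_dd_of_IAb_le hAb.b_pos (hd _) (antitone_IAb_orbit hAb hpos hiter (Nat.zero_le _)) i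
  exact (div_pos (hAb.b_pos i) (exp_pos _)).trans_le
    (ge_of_tendsto' ((continuous_dd A i).tendsto z |>.comp hφz) hlow)

lemma tendsto_KL_EMop_orbit (hAb : IsEMData A b) (hpos : ∀ k j, 0 < x k j)
    (hiter : ∀ k, x (k + 1) = EMop A b (x k)) {L : ℝ}
    (hI : Tendsto (fun k => IAb A b (x k)) atTop (𝓝 L)) :
    Tendsto (fun k => KL (EMop A b (x k)) (x k)) atTop (𝓝 0) := by
  have hgap : Tendsto (fun k => IAb A b (x k) - IAb A b (x (k + 1))) atTop (𝓝 0) := by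
    simpa using hI.sub (hI.comp (tendsto_add_atTop_nat 1))
  refine squeeze_zero (fun k => KL_nonneg (fun j => (EMop_pos hAb (hpos k) j).le) (hpos k))
    (fun k => ?_) hgap
  rw [hiter k]
  linarith [IAb_EMop_add_KL_le hAb (hpos k)]

lemma EMop_eq_self_of_subseq_tendsto (hAb : IsEMData A b) (hpos : ∀ k j, 0 < x k j)
    {z : Fin N → ℝ} (hz : ∀ j, 0 ≤ z j) (hdz : ∀ i, 0 < dd A z i)
    (hKL : Tendsto (fun k => KL (EMop A b (x k)) (x k)) atTop (𝓝 0))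
    {φ : ℕ → ℕ} (hφ : StrictMono φ) (hφz : Tendsto (x ∘ φ) atTop (𝓝 z)) :
    EMop A b z = z := by
  have hH : Tendsto (fun n => hellingerSq (EMop A b (x (φ n))) (x (φ n))) atTop (𝓝 0) :=
    squeeze_zero (fun _ => hellingerSq_nonneg _ _)
      (fun n => hellingerSq_le_KL (fun j => (EMop_pos hAb (hpos _) j).le) (hpos _))
      (hKL.comp hφ.tendsto_atTop)
  have hH' := ((continuousAt_EMop (b := b) hdz).tendsto.comp hφz).hellingerSq hφz
  exact eq_of_hellingerSq_eq_zero (EMop_nonneg hAb.nonneg (fun i => (hAb.b_pos i).le) hz) hz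
    (tendsto_nhds_unique hH' hH)

lemma tendsto_orbit_of_EMop_eq_self (hAb : IsEMData A b) (hpos : ∀ k j, 0 < x k j)
    (hiter : ∀ k, x (k + 1) = EMop A b (x k)) {z : Fin N → ℝ} (hz : ∀ j, 0 ≤ z j)
    (hdz : ∀ i, 0 < dd A z i) (hfix : EMop A b z = z) (hIz : ∀ k, IAb A b z ≤ IAb A b (x k))
    {φ : ℕ → ℕ} (hφ : StrictMono φ) (hφz : Tendsto (x ∘ φ) atTop (𝓝 z)) :
    Tendsto x atTop (𝓝 z) := by
  have hanti : Antitone fun k => KL z (x k) := antitone_nat_of_succ_le fun k => by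
    have := IAb_sub_IAb_le_KL_sub_KL hAb hz hdz hfix (hpos k)
    rw [← hiter k] at this
    linarith [hIz k]
  have hKL : Tendsto (fun k => KL z (x k)) atTop (𝓝 0) :=
    (tendsto_iff_tendsto_subseq_of_antitone hanti hφ.tendsto_atTop).2
      ((tendsto_KL_self hz).comp hφz)
  exact tendsto_of_hellingerSq_tendsto_zero hz (fun k j => (hpos k j).le)
    (squeeze_zero (fun _ => hellingerSq_nonneg _ _) (fun k => hellingerSq_le_KL hz (hpos k)) hKL)

lemma ff_le_one_of_tendsto_orbit (hpos : ∀ k j, 0 < x k j)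
    (hiter : ∀ k, x (k + 1) = EMop A b (x k)) {z : Fin N → ℝ} (hdz : ∀ i, 0 < dd A z i)
    (hfix : EMop A b z = z) (hconv : Tendsto x atTop (𝓝 z)) (j : Fin N) : ff A b z j ≤ 1 := by
  by_contra! hgt
  have hzj : z j = 0 := by
    by_contra hzj
    exact hgt.ne' (ff_eq_one_of_EMop_eq_self hfix hzj)
  obtain ⟨K, hK⟩ := eventually_atTop.1
    (((continuousAt_ff hdz j).tendsto.comp hconv).eventually_const_lt hgt)
  have hmono : Monotone fun n => x (n + K) j := monotone_nat_of_le_succ fun n => by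
    rw [add_right_comm, hiter]
    exact le_mul_of_one_le_right (hpos _ j).le (hK _ (Nat.le_add_left K n)).le
  have hlim := (tendsto_pi_nhds.1 hconv j).comp (tendsto_add_atTop_nat K)
  have := hmono.ge_of_tendsto hlim 0
  simp only [zero_add, hzj] at this
  exact (hpos K j).not_ge this

end Orbit

theorem stmt_3_general
    (M N : ℕ)
    (A : Fin M → Fin N → ℝ) (b : Fin M → ℝ)
    (hA : ∀ i j, 0 ≤ A i j)
    (hcol : ∀ j, ∑ i, A i j = 1)
    (hrow : ∀ i, ∃ j, 0 < A i j)
    (hb : ∀ i, 0 < b i)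
    (x : ℕ → Fin N → ℝ)
    (hx0 : ∀ j, 0 < x 0 j)
    (hiter : ∀ k, x (k + 1) = EMop A b (x k)) :
    ∃ xs : Fin N → ℝ,
      Tendsto x atTop (nhds xs) ∧
      (∀ j, 0 ≤ xs j) ∧
      (∀ y : Fin N → ℝ, (∀ j, 0 ≤ y j) → (∀ i, 0 < dd A y i) →
        IAb A b xs ≤ IAb A b y) ∧
      EMop A b xs = xs ∧
      Antitone (fun k => IAb A b (x k)) ∧
      Tendsto (fun k => IAb A b (x k)) atTop (nhds (IAb A b xs)) := by
  have hAb : IsEMData A b := ⟨hA, hcol, hrow, hb⟩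
  have hpos := orbit_pos hAb hx0 hiter
  have hanti := antitone_IAb_orbit hAb hpos hiter
  obtain ⟨z, hz, hdz, φ, hφ, hφz⟩ := exists_subseq_tendsto_orbit hAb hpos hiter
  have hIz : Tendsto (fun k => IAb A b (x k)) atTop (𝓝 (IAb A b z)) :=
    (tendsto_iff_tendsto_subseq_of_antitone hanti hφ.tendsto_atTop).2
      ((continuousAt_IAb hb hdz).tendsto.comp hφz)
  have hfix : EMop A b z = z :=
    EMop_eq_self_of_subseq_tendsto hAb hpos hz hdz (tendsto_KL_EMop_orbit hAb hpos hiter hIz) hφ hφz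
  have hconv : Tendsto x atTop (𝓝 z) :=
    tendsto_orbit_of_EMop_eq_self hAb hpos hiter hz hdz hfix (hanti.le_of_tendsto hIz) hφ hφz
  have hkkt := ff_le_one_of_tendsto_orbit hpos hiter hdz hfix hconv
  refine ⟨z, hconv, hz, fun y hy hdy => ?_, hfix, hanti, hIz⟩
  exact IAb_le_of_ff_le_one hcol hb hdz (sum_eq_of_EMop_eq_self hdz hfix) hkkt hy hdy

theorem stmt_3
    (M N : ℕ) (hM : 0 < M) (hN : 0 < N)
    (A : Fin M → Fin N → ℝ) (b : Fin M → ℝ)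
    (hA : ∀ i j, 0 ≤ A i j)
    (hcol : ∀ j, ∑ i, A i j = 1)
    (hrow : ∀ i, ∃ j, 0 < A i j)
    (hb : ∀ i, 0 < b i)
    (x : ℕ → Fin N → ℝ)
    (hx0 : ∀ j, 0 < x 0 j)
    (hiter : ∀ k, x (k + 1) = EMop A b (x k)) :
    ∃ xs : Fin N → ℝ,
      Tendsto x atTop (nhds xs) ∧
      (∀ j, 0 ≤ xs j) ∧
      (∀ y : Fin N → ℝ, (∀ j, 0 ≤ y j) → (∀ i, 0 < dd A y i) →
        IAb A b xs ≤ IAb A b y) ∧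
      EMop A b xs = xs ∧
      Antitone (fun k => IAb A b (x k)) ∧
      Tendsto (fun k => IAb A b (x k)) atTop (nhds (IAb A b xs)) :=
  stmt_3_general M N A b hA hcol hrow hb x hx0 hiter
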